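/- arXiv:1905.01736 — 6 statements merged into one kernel-verified Lean document; each statement's English description precedes it below -/
import Mathlib

section
/- Let Q be a real p×p matrix with nonnegative off-diagonal entries and Q·𝟏 = 0 (𝟏 the all-ones column vector), and suppose the kernel of Q (acting on column vectors) is exactly the span of 𝟏. Let π be a row vector with strictly positive entries, π·𝟏 = 1 and π·Q = 0. Let J = 𝟏·π be the rank-one matrix whose rows all equal π, and assume J − Q is invertible. Then for every diagonal matrix D with nonnegative diagonal entries, π·D·((J − Q)⁻¹ − J)·D·𝟏 ≥ 0. -/
/-!
Write `f` for the diagonal of `D`, `J = 𝟏π`, and `g = ((J − Q)⁻¹ − J) f`. Then `π g = 0` and `g`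
solves the Poisson equation `Q g = (π f) 𝟏 − f`, so the quantity equals `−Σᵢ πᵢ gᵢ (Q g)ᵢ`. Because
`Q 𝟏 = 0` and `π Q = 0`, this is the Dirichlet form `½ Σᵢⱼ πᵢ Qᵢⱼ (gᵢ − gⱼ)²`, a sum of nonnegative
terms since `Q` is nonnegative off the diagonal.
-/

open Matrix

namespace Matrix

variable {n R : Type*} [Fintype n]

section CommRing

variable [CommRing R] {Q : Matrix n n R} {π : n → R}

lemma sum_sum_mul_sub_sq_eq (hQ1 : Q *ᵥ 1 = 0) (hπQ : π ᵥ* Q = 0) (g : n → R) :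
    ∑ i, ∑ j, π i * Q i j * (g i - g j) ^ 2 = -2 * ((π * g) ⬝ᵥ (Q *ᵥ g)) := by
  have hrow (i : n) : ∑ j, Q i j = 0 := by simpa [mulVec, dotProduct] using congrFun hQ1 i
  have hcol (j : n) : ∑ i, π i * Q i j = 0 := by simpa [vecMul, dotProduct] using congrFun hπQ j
  have hrows : ∑ i, ∑ j, π i * Q i j * g i ^ 2 = 0 :=
    Finset.sum_eq_zero fun i _ => by
      rw [← Finset.sum_mul, ← Finset.mul_sum, hrow, mul_zero, zero_mul]
  have hcols : ∑ i, ∑ j, π i * Q i j * g j ^ 2 = 0 := by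
    rw [Finset.sum_comm]
    exact Finset.sum_eq_zero fun j _ => by rw [← Finset.sum_mul, hcol, zero_mul]
  have hcross : ∑ i, ∑ j, π i * Q i j * (g i * g j) = (π * g) ⬝ᵥ (Q *ᵥ g) := by
    simp only [dotProduct, mulVec, Pi.mul_apply, Finset.mul_sum]
    exact Finset.sum_congr rfl fun i _ => Finset.sum_congr rfl fun j _ => by ring
  calc ∑ i, ∑ j, π i * Q i j * (g i - g j) ^ 2
      = ∑ i, ∑ j, π i * Q i j * g i ^ 2 + ∑ i, ∑ j, π i * Q i j * g j ^ 2
          - 2 * ∑ i, ∑ j, π i * Q i j * (g i * g j) := by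
        simp only [Finset.mul_sum, ← Finset.sum_add_distrib, ← Finset.sum_sub_distrib]
        exact Finset.sum_congr rfl fun i _ => Finset.sum_congr rfl fun j _ => by ring
    _ = -2 * ((π * g) ⬝ᵥ (Q *ᵥ g)) := by rw [hrows, hcols, hcross]; ring

lemma vecMul_vecMulVec_one_sub (hπ1 : π ⬝ᵥ 1 = 1) (hπQ : π ᵥ* Q = 0) :
    π ᵥ* (vecMulVec 1 π - Q) = π := by
  rw [vecMul_sub, vecMul_vecMulVec, hπ1, one_smul, hπQ, sub_zero]

variable [DecidableEq n]

lemma vecMul_inv_vecMulVec_one_sub (hπ1 : π ⬝ᵥ 1 = 1) (hπQ : π ᵥ* Q = 0)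
    (h : IsUnit (vecMulVec 1 π - Q).det) : π ᵥ* (vecMulVec 1 π - Q)⁻¹ = π :=
  calc π ᵥ* (vecMulVec 1 π - Q)⁻¹
      = (π ᵥ* (vecMulVec 1 π - Q)) ᵥ* (vecMulVec 1 π - Q)⁻¹ := by
        rw [vecMul_vecMulVec_one_sub hπ1 hπQ]
    _ = π := by rw [vecMul_vecMul, mul_nonsing_inv _ h, vecMul_one]

variable (Q π) in
/-- The deviation matrix `D_Q^♯ = (𝟏π − Q)⁻¹ − 𝟏π`; it is junk unless `𝟏π − Q` is invertible. -/
noncomputable def deviationMatrix : Matrix n n R :=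
  (vecMulVec 1 π - Q)⁻¹ - vecMulVec 1 π

lemma vecMul_deviationMatrix (hπ1 : π ⬝ᵥ 1 = 1) (hπQ : π ᵥ* Q = 0)
    (h : IsUnit (vecMulVec 1 π - Q).det) : π ᵥ* deviationMatrix Q π = 0 := by
  rw [deviationMatrix, vecMul_sub, vecMul_inv_vecMulVec_one_sub hπ1 hπQ h, vecMul_vecMulVec, hπ1,
    one_smul, sub_self]

lemma mul_deviationMatrix (hπ1 : π ⬝ᵥ 1 = 1) (hQ1 : Q *ᵥ 1 = 0) (hπQ : π ᵥ* Q = 0)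
    (h : IsUnit (vecMulVec 1 π - Q).det) :
    Q * deviationMatrix Q π = vecMulVec 1 π - 1 := by
  have hQ : Q = vecMulVec 1 π - (vecMulVec 1 π - Q) := (sub_sub_cancel _ _).symm
  rw [deviationMatrix, Matrix.mul_sub, mul_vecMulVec, hQ1, zero_vecMulVec, sub_zero]
  nth_rewrite 1 [hQ]
  rw [Matrix.sub_mul, vecMulVec_mul, vecMul_inv_vecMulVec_one_sub hπ1 hπQ h, mul_nonsing_inv _ h]

lemma vecMul_diagonal_mul_mul_diagonal_dotProduct_one (π d : n → R) (A : Matrix n n R) :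
    (π ᵥ* (diagonal d * A * diagonal d)) ⬝ᵥ 1 = (π * d) ⬝ᵥ (A *ᵥ d) := by
  have hd : diagonal d *ᵥ 1 = d := funext fun i => by rw [mulVec_diagonal, Pi.one_apply, mul_one]
  rw [← dotProduct_mulVec, ← mulVec_mulVec, ← mulVec_mulVec, hd]
  simp only [dotProduct, mulVec_diagonal, Pi.mul_apply, mul_assoc]

end CommRing

section Ordered

variable [CommRing R] [LinearOrder R] [IsStrictOrderedRing R] {Q : Matrix n n R} {π : n → R}

lemma dotProduct_mul_mulVec_nonpos (hQoff : ∀ i j, i ≠ j → 0 ≤ Q i j) (hQ1 : Q *ᵥ 1 = 0)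
    (hπ : ∀ i, 0 ≤ π i) (hπQ : π ᵥ* Q = 0) (g : n → R) :
    (π * g) ⬝ᵥ (Q *ᵥ g) ≤ 0 := by
  have : 0 ≤ ∑ i, ∑ j, π i * Q i j * (g i - g j) ^ 2 := by
    refine Finset.sum_nonneg fun i _ => Finset.sum_nonneg fun j _ => ?_
    rcases eq_or_ne i j with rfl | hij
    · simp
    · exact mul_nonneg (mul_nonneg (hπ i) (hQoff i j hij)) (sq_nonneg _)
  linarith [sum_sum_mul_sub_sq_eq hQ1 hπQ g]

lemma dotProduct_mul_deviationMatrix_mulVec_nonneg [DecidableEq n]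
    (hQoff : ∀ i j, i ≠ j → 0 ≤ Q i j) (hQ1 : Q *ᵥ 1 = 0) (hπ : ∀ i, 0 ≤ π i)
    (hπ1 : π ⬝ᵥ 1 = 1) (hπQ : π ᵥ* Q = 0) (h : IsUnit (vecMulVec 1 π - Q).det) (f : n → R) :
    0 ≤ (π * f) ⬝ᵥ (deviationMatrix Q π *ᵥ f) := by
  set g := deviationMatrix Q π *ᵥ f
  have hπg : π ⬝ᵥ g = 0 := by
    rw [dotProduct_mulVec, vecMul_deviationMatrix hπ1 hπQ h, zero_dotProduct]
  have hpoisson : Q *ᵥ g = vecMulVec 1 π *ᵥ f - f := by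
    rw [mulVec_mulVec, mul_deviationMatrix hπ1 hQ1 hπQ h, sub_mulVec, one_mulVec]
  have hswap : (π * f) ⬝ᵥ g = (π * g) ⬝ᵥ f := by
    simp only [dotProduct, Pi.mul_apply, mul_right_comm]
  have hform : (π * f) ⬝ᵥ g = -((π * g) ⬝ᵥ (Q *ᵥ g)) := by
    rw [hswap, hpoisson, dotProduct_sub, dotProduct_mulVec, vecMul_vecMulVec, dotProduct_one]
    simp only [Pi.mul_apply, ← dotProduct.eq_1, hπg, zero_smul, zero_dotProduct, zero_sub, neg_neg]
  rw [hform, neg_nonneg]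
  exact dotProduct_mul_mulVec_nonpos hQoff hQ1 hπ hπQ g

end Ordered

end Matrix

theorem stmt_3_general {p : ℕ} (Q : Matrix (Fin p) (Fin p) ℝ)
    (hQoff : ∀ i j, i ≠ j → 0 ≤ Q i j)
    (hQ1 : Q *ᵥ (1 : Fin p → ℝ) = 0)
    (π : Fin p → ℝ) (hπpos : ∀ i, 0 < π i)
    (hπ1 : π ⬝ᵥ (1 : Fin p → ℝ) = 1) (hπQ : π ᵥ* Q = 0)
    (J : Matrix (Fin p) (Fin p) ℝ) (hJ : J = Matrix.of fun _ j => π j)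
    (hJQ : IsUnit (J - Q).det)
    (D : Matrix (Fin p) (Fin p) ℝ)
    (hDdiag : ∀ i j, i ≠ j → D i j = 0) :
    0 ≤ (π ᵥ* (D * ((J - Q)⁻¹ - J) * D)) ⬝ᵥ (1 : Fin p → ℝ) := by
  obtain rfl : J = vecMulVec 1 π := hJ.trans (by ext; simp [vecMulVec_apply])
  rw [← (show D.IsDiag from hDdiag).diagonal_diag, vecMul_diagonal_mul_mul_diagonal_dotProduct_one]
  exact dotProduct_mul_deviationMatrix_mulVec_nonneg hQoff hQ1 (fun i => (hπpos i).le) hπ1 hπQ hJQ _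

/-- For an irreducible-generator-like matrix `Q` (nonnegative off-diagonal
entries, `Q·𝟏 = 0`, kernel exactly the span of `𝟏`) with positive stationary row vector `π`,
`J = 𝟏·π`, `J − Q` invertible: for every nonnegative diagonal matrix `D`,
`π·D·((J − Q)⁻¹ − J)·D·𝟏 ≥ 0`. -/
theorem stmt_3 {p : ℕ} (Q : Matrix (Fin p) (Fin p) ℝ)
    (hQoff : ∀ i j, i ≠ j → 0 ≤ Q i j)
    (hQ1 : Q *ᵥ (1 : Fin p → ℝ) = 0)
    (hker : ∀ v : Fin p → ℝ, Q *ᵥ v = 0 → ∃ c : ℝ, v = c • (1 : Fin p → ℝ))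
    (π : Fin p → ℝ) (hπpos : ∀ i, 0 < π i)
    (hπ1 : π ⬝ᵥ (1 : Fin p → ℝ) = 1) (hπQ : π ᵥ* Q = 0)
    (J : Matrix (Fin p) (Fin p) ℝ) (hJ : J = Matrix.of fun _ j => π j)
    (hJQ : IsUnit (J - Q).det)
    (D : Matrix (Fin p) (Fin p) ℝ)
    (hDdiag : ∀ i j, i ≠ j → D i j = 0) (hDnonneg : ∀ i, 0 ≤ D i i) :
    0 ≤ (π ᵥ* (D * ((J - Q)⁻¹ - J) * D)) ⬝ᵥ (1 : Fin p → ℝ) :=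
  stmt_3_general Q hQoff hQ1 π hπpos hπ1 hπQ J hJ hJQ D hDdiag
end

section
/- Let α : Fin p → ℝ be a probability vector (αᵢ ≥ 0, Σᵢ αᵢ = 1) and c : Fin p → ℝ with cᵢ ≥ 0 for all i. Then the hazard-rate function h(t) = (Σᵢ αᵢ·cᵢ·exp(−cᵢ·t)) / (Σᵢ αᵢ·exp(−cᵢ·t)) is antitone (non-increasing) on [0, ∞). -/
/-!
Write `h(t) = N(t) / D(t)` with `D(t) = Σᵢ αᵢ e^{-cᵢ t}` and `N(t) = Σᵢ αᵢ cᵢ e^{-cᵢ t}`.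
For `s ≤ t`, the inequality `N(t) D(s) ≤ N(s) D(t)` is the weighted Chebyshev sum inequality with
weights `αᵢ e^{-cᵢ s}` for the oppositely ordered sequences `cᵢ` and `e^{-cᵢ (t - s)}`.
-/

open Finset Real

theorem Antivary.weighted_card_mul_sum_le_sum_mul_sum {ι R : Type*} [CommRing R] [LinearOrder R]
    [IsStrictOrderedRing R] {s : Finset ι} {w f g : ι → R} (hw : ∀ i ∈ s, 0 ≤ w i)
    (hfg : Antivary f g) :
    (∑ i ∈ s, w i) * ∑ i ∈ s, w i * (f i * g i) ≤ (∑ i ∈ s, w i * f i) * ∑ i ∈ s, w i * g i := by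
  have hpair : ∑ i ∈ s, ∑ j ∈ s, w i * w j * ((f j - f i) * (g j - g i)) ≤ 0 :=
    sum_nonpos fun i hi ↦ sum_nonpos fun j hj ↦
      mul_nonpos_of_nonneg_of_nonpos (mul_nonneg (hw i hi) (hw j hj)) (hfg.sub_mul_sub_nonpos i j)
  have hexpand : ∑ i ∈ s, ∑ j ∈ s, w i * w j * ((f j - f i) * (g j - g i)) =
      2 * ((∑ i ∈ s, w i) * ∑ i ∈ s, w i * (f i * g i) -
        (∑ i ∈ s, w i * f i) * ∑ i ∈ s, w i * g i) := by
    have hterm : ∀ i j, w i * w j * ((f j - f i) * (g j - g i)) =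
        (w i * (w j * (f j * g j)) - w i * f i * (w j * g j)) +
          (w j * (w i * (f i * g i)) - w j * f j * (w i * g i)) := fun i j ↦ by ring
    simp only [hterm, sum_add_distrib, sum_sub_distrib, ← mul_sum, ← sum_mul]
    ring
  linarith

noncomputable def hazardRate {ι : Type*} [Fintype ι] (α c : ι → ℝ) (t : ℝ) : ℝ :=
  (∑ i, α i * c i * exp (-c i * t)) / ∑ i, α i * exp (-c i * t)

section HazardRate

variable {ι : Type*} [Fintype ι] {α : ι → ℝ} (c : ι → ℝ)

theorem hazardRate_cross_mul_le (hα : ∀ i, 0 ≤ α i) {s t : ℝ} (hst : s ≤ t) :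
    (∑ i, α i * c i * exp (-c i * t)) * ∑ i, α i * exp (-c i * s) ≤
      (∑ i, α i * c i * exp (-c i * s)) * ∑ i, α i * exp (-c i * t) := by
  have hexp : ∀ i, exp (-c i * s) * exp (-c i * (t - s)) = exp (-c i * t) := fun i ↦ by
    rw [← exp_add]; ring_nf
  have hdecay : Antitone fun x : ℝ ↦ exp (-x * (t - s)) := fun x y hxy ↦
    exp_le_exp.2 (by nlinarith)
  have hanti : Antivary ((fun x : ℝ ↦ exp (-x * (t - s))) ∘ c) c :=
    (monovary_self c).comp_antitone_left hdecay
  have hcheb := hanti.weighted_card_mul_sum_le_sum_mul_sum (s := univ)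
    (w := fun i ↦ α i * exp (-c i * s)) fun i _ ↦ mul_nonneg (hα i) (exp_pos _).le
  simp only [Function.comp_apply] at hcheb
  calc (∑ i, α i * c i * exp (-c i * t)) * ∑ i, α i * exp (-c i * s)
      = (∑ i, α i * exp (-c i * s)) *
          ∑ i, α i * exp (-c i * s) * (exp (-c i * (t - s)) * c i) := by
        rw [mul_comm]
        congr 1
        exact sum_congr rfl fun i _ ↦ by rw [← hexp]; ring
    _ ≤ (∑ i, α i * exp (-c i * s) * exp (-c i * (t - s))) *
          ∑ i, α i * exp (-c i * s) * c i := hcheb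
    _ = (∑ i, α i * c i * exp (-c i * s)) * ∑ i, α i * exp (-c i * t) := by
        rw [mul_comm]
        congr 1
        · exact sum_congr rfl fun i _ ↦ by ring
        · exact sum_congr rfl fun i _ ↦ by rw [← hexp]; ring

theorem antitone_hazardRate (hα : ∀ i, 0 ≤ α i) : Antitone (hazardRate α c) := by
  intro s t hst
  by_cases hzero : ∀ i, α i = 0
  · simp [hazardRate, hzero]
  obtain ⟨j, hj⟩ := not_forall.1 hzero
  have hpos : ∀ u, 0 < ∑ i, α i * exp (-c i * u) := fun u ↦
    sum_pos' (fun i _ ↦ mul_nonneg (hα i) (exp_pos _).le)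
      ⟨j, mem_univ j, mul_pos ((hα j).lt_of_ne' hj) (exp_pos _)⟩
  rw [hazardRate, hazardRate, div_le_div_iff₀ (hpos t) (hpos s)]
  exact hazardRate_cross_mul_le c hα hst

end HazardRate

theorem stmt_5_general {p : ℕ} (α c : Fin p → ℝ)
    (hα_nonneg : ∀ i, 0 ≤ α i) :
    AntitoneOn
      (fun t => (∑ i, α i * c i * Real.exp (-(c i) * t)) /
        (∑ i, α i * Real.exp (-(c i) * t)))
      (Set.Ici (0 : ℝ)) :=
  (antitone_hazardRate c hα_nonneg).antitoneOn _

/-- For a probability vector `α` and nonnegative rates `c`, the hazard rate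
`h(t) = (Σᵢ αᵢ·cᵢ·e^{−cᵢt}) / (Σᵢ αᵢ·e^{−cᵢt})` is non-increasing on `[0, ∞)`. -/
theorem stmt_5 {p : ℕ} (α c : Fin p → ℝ)
    (hα_nonneg : ∀ i, 0 ≤ α i) (hα_sum : ∑ i, α i = 1)
    (hc : ∀ i, 0 ≤ c i) :
    AntitoneOn
      (fun t => (∑ i, α i * c i * Real.exp (-(c i) * t)) /
        (∑ i, α i * Real.exp (-(c i) * t)))
      (Set.Ici (0 : ℝ)) :=
  stmt_5_general α c hα_nonneg
end

section
/- Let σ₁, σ₂ > 0 and λ₁, λ₂ ≥ 0 with λ₁σ₂ + λ₂σ₁ + λ₁λ₂ > 0. Let C be the 2×2 real matrix with rows (−σ₁−λ₁, σ₁) and (σ₂, −σ₂−λ₂), and let π = (σ₂/(σ₁+σ₂), σ₁/(σ₁+σ₂)). Then C is invertible and c² := 2·(π·C·𝟏)·(π·C⁻¹·𝟏) − 1 = 1 + 2σ₁σ₂(λ₁−λ₂)² / ((σ₁+σ₂)²·(λ₂σ₁ + λ₁λ₂ + λ₁σ₂)); in particular c² ≥ 1, with equality if and only if λ₁ = λ₂.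 -/
/-!
Since the rows of the generator `Q` sum to zero, `C 𝟏 = -(λ₁, λ₂)`, so `π C 𝟏` is minus the mean
rate `(σ₂λ₁ + σ₁λ₂)/(σ₁+σ₂)`; the adjugate formula gives `C⁻¹ 𝟏` explicitly. What remains is the
polynomial identity `MMPP2.scv_identity`, whose excess term `σ₁σ₂(λ₁-λ₂)²` is visibly nonnegative
and vanishes exactly when `λ₁ = λ₂`.
-/

open Matrix

/-- `c²` of the event-stationary inter-event time, through `c² + 1 = 2 (π C 𝟏) (π C⁻¹ 𝟏)`. -/
noncomputable def scv {n : Type*} [Fintype n] [DecidableEq n] (π : n → ℝ) (C : Matrix n n ℝ) : ℝ :=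
  2 * ((π ᵥ* C) ⬝ᵥ 1) * ((π ᵥ* C⁻¹) ⬝ᵥ 1) - 1

namespace MMPP2

variable (σ₁ σ₂ lam₁ lam₂ : ℝ)

/-- `C = Q - D` for the generator `Q` with off-diagonal rates `σ₁, σ₂` and `D = diag(lam₁, lam₂)`. -/
def eventMatrix : Matrix (Fin 2) (Fin 2) ℝ :=
  !![-σ₁ - lam₁, σ₁; σ₂, -σ₂ - lam₂]

noncomputable def stationaryDist : Fin 2 → ℝ :=
  ![σ₂ / (σ₁ + σ₂), σ₁ / (σ₁ + σ₂)]

theorem det_eventMatrix :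
    (eventMatrix σ₁ σ₂ lam₁ lam₂).det = lam₁ * σ₂ + lam₂ * σ₁ + lam₁ * lam₂ := by
  simp only [eventMatrix, det_fin_two_of]
  ring

theorem eventMatrix_mulVec_one : eventMatrix σ₁ σ₂ lam₁ lam₂ *ᵥ 1 = -![lam₁, lam₂] := by
  ext i
  fin_cases i <;> simp [eventMatrix, mulVec, dotProduct, Fin.sum_univ_two] <;> ring

theorem inv_eventMatrix_mulVec_one :
    (eventMatrix σ₁ σ₂ lam₁ lam₂)⁻¹ *ᵥ 1 =
      -(lam₁ * σ₂ + lam₂ * σ₁ + lam₁ * lam₂)⁻¹ • ![σ₁ + σ₂ + lam₂, σ₁ + σ₂ + lam₁] := by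
  rw [inv_def, Ring.inverse_eq_inv', det_eventMatrix, smul_mulVec]
  ext i
  fin_cases i <;> simp [eventMatrix, adjugate_fin_two_of, dotProduct, Fin.sum_univ_two] <;> ring

theorem vecMul_eventMatrix_dotProduct_one (π : Fin 2 → ℝ) :
    (π ᵥ* eventMatrix σ₁ σ₂ lam₁ lam₂) ⬝ᵥ 1 = -(π 0 * lam₁ + π 1 * lam₂) := by
  rw [← dotProduct_mulVec, eventMatrix_mulVec_one]
  simp [dotProduct, Fin.sum_univ_two]

theorem vecMul_inv_eventMatrix_dotProduct_one (π : Fin 2 → ℝ) :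
    (π ᵥ* (eventMatrix σ₁ σ₂ lam₁ lam₂)⁻¹) ⬝ᵥ 1 =
      -(π 0 * (σ₁ + σ₂ + lam₂) + π 1 * (σ₁ + σ₂ + lam₁)) /
        (lam₁ * σ₂ + lam₂ * σ₁ + lam₁ * lam₂) := by
  rw [← dotProduct_mulVec, inv_eventMatrix_mulVec_one]
  simp only [dotProduct, Fin.sum_univ_two, Pi.smul_apply, smul_eq_mul, cons_val_zero, cons_val_one]
  ring

theorem scv_identity :
    (σ₂ * lam₁ + σ₁ * lam₂) * ((σ₁ + σ₂) ^ 2 + σ₂ * lam₂ + σ₁ * lam₁) =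
      (σ₁ + σ₂) ^ 2 * (lam₁ * σ₂ + lam₂ * σ₁ + lam₁ * lam₂) + σ₁ * σ₂ * (lam₁ - lam₂) ^ 2 := by
  ring

variable {σ₁ σ₂ lam₁ lam₂}

theorem scv_eq (hσ : σ₁ + σ₂ ≠ 0) (hdet : lam₁ * σ₂ + lam₂ * σ₁ + lam₁ * lam₂ ≠ 0) :
    scv (stationaryDist σ₁ σ₂) (eventMatrix σ₁ σ₂ lam₁ lam₂) =
      1 + 2 * σ₁ * σ₂ * (lam₁ - lam₂) ^ 2 /
        ((σ₁ + σ₂) ^ 2 * (lam₂ * σ₁ + lam₁ * lam₂ + lam₁ * σ₂)) := by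
  have hdet_comm : lam₂ * σ₁ + lam₁ * lam₂ + lam₁ * σ₂ = lam₁ * σ₂ + lam₂ * σ₁ + lam₁ * lam₂ := by
    ring
  rw [hdet_comm, scv, vecMul_eventMatrix_dotProduct_one, vecMul_inv_eventMatrix_dotProduct_one]
  simp only [stationaryDist, cons_val_zero, cons_val_one]
  -- keeps `field_simp` from reordering the determinant out of reach of `hdet`
  generalize hd : lam₁ * σ₂ + lam₂ * σ₁ + lam₁ * lam₂ = d at hdet ⊢
  field_simp
  subst hd
  linear_combination 2 * scv_identity σ₁ σ₂ lam₁ lam₂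

theorem one_le_scv (hσ₁ : 0 < σ₁) (hσ₂ : 0 < σ₂)
    (hdet : 0 < lam₁ * σ₂ + lam₂ * σ₁ + lam₁ * lam₂) :
    1 ≤ scv (stationaryDist σ₁ σ₂) (eventMatrix σ₁ σ₂ lam₁ lam₂) := by
  rw [scv_eq (by positivity) hdet.ne']
  exact le_add_of_nonneg_right <|
    div_nonneg (by positivity) <| mul_nonneg (by positivity) (by linarith)

theorem scv_eq_one_iff (hσ₁ : 0 < σ₁) (hσ₂ : 0 < σ₂)
    (hdet : 0 < lam₁ * σ₂ + lam₂ * σ₁ + lam₁ * lam₂) :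
    scv (stationaryDist σ₁ σ₂) (eventMatrix σ₁ σ₂ lam₁ lam₂) = 1 ↔ lam₁ = lam₂ := by
  have hden : (σ₁ + σ₂) ^ 2 * (lam₂ * σ₁ + lam₁ * lam₂ + lam₁ * σ₂) ≠ 0 :=
    (mul_pos (by positivity) (by linarith)).ne'
  rw [scv_eq (by positivity) hdet.ne', add_eq_left, div_eq_zero_iff, or_iff_left hden, mul_eq_zero,
    or_iff_right (by positivity), pow_eq_zero_iff two_ne_zero, sub_eq_zero]

end MMPP2

theorem stmt_10_general (σ₁ σ₂ lam₁ lam₂ : ℝ) (hσ₁ : 0 < σ₁) (hσ₂ : 0 < σ₂)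
    (hpos : 0 < lam₁ * σ₂ + lam₂ * σ₁ + lam₁ * lam₂)
    (C : Matrix (Fin 2) (Fin 2) ℝ) (hC : C = !![-σ₁ - lam₁, σ₁; σ₂, -σ₂ - lam₂])
    (π : Fin 2 → ℝ) (hπ : π = ![σ₂ / (σ₁ + σ₂), σ₁ / (σ₁ + σ₂)]) :
    IsUnit C.det ∧
      2 * ((π ᵥ* C) ⬝ᵥ (1 : Fin 2 → ℝ)) * ((π ᵥ* C⁻¹) ⬝ᵥ (1 : Fin 2 → ℝ)) - 1 =
        1 + 2 * σ₁ * σ₂ * (lam₁ - lam₂) ^ 2 /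
          ((σ₁ + σ₂) ^ 2 * (lam₂ * σ₁ + lam₁ * lam₂ + lam₁ * σ₂)) ∧
      1 ≤ 2 * ((π ᵥ* C) ⬝ᵥ (1 : Fin 2 → ℝ)) * ((π ᵥ* C⁻¹) ⬝ᵥ (1 : Fin 2 → ℝ)) - 1 ∧
      (2 * ((π ᵥ* C) ⬝ᵥ (1 : Fin 2 → ℝ)) * ((π ᵥ* C⁻¹) ⬝ᵥ (1 : Fin 2 → ℝ)) - 1 = 1 ↔
        lam₁ = lam₂) := by
  obtain rfl : C = MMPP2.eventMatrix σ₁ σ₂ lam₁ lam₂ := hC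
  obtain rfl : π = MMPP2.stationaryDist σ₁ σ₂ := hπ
  refine ⟨?_, MMPP2.scv_eq (by positivity) hpos.ne', MMPP2.one_le_scv hσ₁ hσ₂ hpos,
    MMPP2.scv_eq_one_iff hσ₁ hσ₂ hpos⟩
  rw [MMPP2.det_eventMatrix]
  exact hpos.ne'.isUnit

/-- For an MMPP₂ with `C = !![−σ₁−lam₁, σ₁; σ₂, −σ₂−lam₂]` and
`π = (σ₂, σ₁)/(σ₁+σ₂)`, the matrix `C` is invertible and
`c² = 2·(π·C·𝟏)·(π·C⁻¹·𝟏) − 1 = 1 + 2σ₁σ₂(lam₁−lam₂)²/((σ₁+σ₂)²(lam₂σ₁+lam₁lam₂+lam₁σ₂))`;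
in particular `c² ≥ 1` with equality iff `lam₁ = lam₂`. -/
theorem stmt_10 (σ₁ σ₂ lam₁ lam₂ : ℝ) (hσ₁ : 0 < σ₁) (hσ₂ : 0 < σ₂)
    (hlam₁ : 0 ≤ lam₁) (hlam₂ : 0 ≤ lam₂) (hpos : 0 < lam₁ * σ₂ + lam₂ * σ₁ + lam₁ * lam₂)
    (C : Matrix (Fin 2) (Fin 2) ℝ) (hC : C = !![-σ₁ - lam₁, σ₁; σ₂, -σ₂ - lam₂])
    (π : Fin 2 → ℝ) (hπ : π = ![σ₂ / (σ₁ + σ₂), σ₁ / (σ₁ + σ₂)]) :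
    IsUnit C.det ∧
      2 * ((π ᵥ* C) ⬝ᵥ (1 : Fin 2 → ℝ)) * ((π ᵥ* C⁻¹) ⬝ᵥ (1 : Fin 2 → ℝ)) - 1 =
        1 + 2 * σ₁ * σ₂ * (lam₁ - lam₂) ^ 2 /
          ((σ₁ + σ₂) ^ 2 * (lam₂ * σ₁ + lam₁ * lam₂ + lam₁ * σ₂)) ∧
      1 ≤ 2 * ((π ᵥ* C) ⬝ᵥ (1 : Fin 2 → ℝ)) * ((π ᵥ* C⁻¹) ⬝ᵥ (1 : Fin 2 → ℝ)) - 1 ∧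
      (2 * ((π ᵥ* C) ⬝ᵥ (1 : Fin 2 → ℝ)) * ((π ᵥ* C⁻¹) ⬝ᵥ (1 : Fin 2 → ℝ)) - 1 = 1 ↔
        lam₁ = lam₂) :=
  stmt_10_general σ₁ σ₂ lam₁ lam₂ hσ₁ hσ₂ hpos C hC π hπ
end

section
/- Let σ₁, σ₂ > 0 and λ₁, λ₂ ≥ 0 with σ₂λ₁ + σ₁λ₂ > 0. Let C be the 2×2 real matrix with rows (−σ₁−λ₁, σ₁) and (σ₂, −σ₂−λ₂), and let α = (σ₂λ₁/(σ₂λ₁+σ₁λ₂), σ₁λ₂/(σ₂λ₁+σ₁λ₂)). Then for all t ≥ 0, using the matrix exponential exp(tC): (α·C·exp(tC)·(−C)·𝟏)·(α·exp(tC)·𝟏) + (α·C·exp(tC)·𝟏)² ≤ 0, with equality for all t when λ₁ = λ₂. -/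
open Matrix

/-!
Write `f(t) = α e^{tC} 𝟏` for the survival function. The expression is `f'² - f f''`, that is,
minus the determinant of the Hankel matrix of the moments `α Cᵏ e^{tC} 𝟏`, `k = 0, 1, 2`. Since
`e^{tC}` commutes with `C`, that Hankel matrix factors as `A e^{tC} B` with `A`, `B` independent
of `t`, so its determinant is `det e^{tC} ≥ 0` times its value at `t = 0`. The latter is an
explicit polynomial, `σ₁σ₂(λ₁ - λ₂)²(σ₂λ₁ + σ₁λ₂ + λ₁λ₂)` up to the square of the normalisation.
-/

namespace Matrix

variable {R : Type*} [CommRing R]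

theorem det_of_mul_mul_transpose_of_fin_two (a u v w : Fin 2 → R) (N : Matrix (Fin 2) (Fin 2) R) :
    (of ![a, u] * N * (of ![v, w])ᵀ).det =
      a ⬝ᵥ N *ᵥ v * u ⬝ᵥ N *ᵥ w - a ⬝ᵥ N *ᵥ w * u ⬝ᵥ N *ᵥ v := by
  rw [det_fin_two]
  simp only [mul_mul_apply, transpose_transpose]
  rfl

def hankelDet (a v : Fin 2 → R) (C : Matrix (Fin 2) (Fin 2) R) : R :=
  !![a ⬝ᵥ v, (a ᵥ* C) ⬝ᵥ v; (a ᵥ* C) ⬝ᵥ v, (a ᵥ* (C * C)) ⬝ᵥ v].det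

theorem hankelDet_eq (a v : Fin 2 → R) (C : Matrix (Fin 2) (Fin 2) R) :
    hankelDet a v C = a ⬝ᵥ v * (a ᵥ* (C * C)) ⬝ᵥ v - ((a ᵥ* C) ⬝ᵥ v) ^ 2 := by
  rw [hankelDet, det_fin_two_of, sq]

theorem hankelDet_vecMul_of_commute {C M : Matrix (Fin 2) (Fin 2) R} (h : Commute C M)
    (a v : Fin 2 → R) : hankelDet (a ᵥ* M) v C = M.det * hankelDet a v C := by
  have hM := det_of_mul_mul_transpose_of_fin_two a (a ᵥ* C) v (C *ᵥ v) M
  have h1 := det_of_mul_mul_transpose_of_fin_two a (a ᵥ* C) v (C *ᵥ v) 1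
  rw [det_mul, det_mul] at hM
  rw [Matrix.mul_one, det_mul, one_mulVec, one_mulVec] at h1
  simp only [mulVec_mulVec, dotProduct_mulVec, vecMul_vecMul, ← h.eq] at hM h1
  have hMCC : M * (C * C) = C * (C * M) := by
    rw [← Matrix.mul_assoc, ← h.eq, Matrix.mul_assoc, ← h.eq]
  rw [hankelDet_eq, hankelDet_eq, vecMul_vecMul, vecMul_vecMul, hMCC, ← h.eq]
  linear_combination -hM + M.det * h1

theorem det_exp_nonneg {n : Type*} [Fintype n] [DecidableEq n] (A : Matrix n n ℝ) :
    0 ≤ (NormedSpace.exp A).det := by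
  have hA : A = (1 / 2 : ℝ) • A + (1 / 2 : ℝ) • A := by rw [← add_smul, add_halves, one_smul]
  rw [hA, exp_add_of_commute _ _ (Commute.refl _), det_mul]
  exact mul_self_nonneg _

end Matrix

theorem mmpp₂_hankelDet_eq (σ₁ σ₂ lam₁ lam₂ : ℝ) :
    hankelDet ![σ₂ * lam₁ / (σ₂ * lam₁ + σ₁ * lam₂), σ₁ * lam₂ / (σ₂ * lam₁ + σ₁ * lam₂)] 1
        !![-σ₁ - lam₁, σ₁; σ₂, -σ₂ - lam₂] =
      σ₁ * σ₂ * (lam₁ - lam₂) ^ 2 * (σ₂ * lam₁ + σ₁ * lam₂ + lam₁ * lam₂) /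
        (σ₂ * lam₁ + σ₁ * lam₂) ^ 2 := by
  simp only [hankelDet_eq, vecMul, dotProduct, Fin.sum_univ_two, mul_apply, of_apply,
    cons_val_zero, cons_val_one, Pi.one_apply, div_eq_mul_inv, ← inv_pow]
  ring

theorem stmt_12_general (σ₁ σ₂ lam₁ lam₂ : ℝ) (hσ₁ : 0 < σ₁) (hσ₂ : 0 < σ₂)
    (hlam₁ : 0 ≤ lam₁) (hlam₂ : 0 ≤ lam₂)
    (C : Matrix (Fin 2) (Fin 2) ℝ) (hC : C = !![-σ₁ - lam₁, σ₁; σ₂, -σ₂ - lam₂])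
    (α : Fin 2 → ℝ)
    (hα : α = ![σ₂ * lam₁ / (σ₂ * lam₁ + σ₁ * lam₂), σ₁ * lam₂ / (σ₂ * lam₁ + σ₁ * lam₂)]) :
    (∀ t : ℝ, 0 ≤ t →
      ((α ᵥ* (C * NormedSpace.exp (t • C) * (-C))) ⬝ᵥ (1 : Fin 2 → ℝ)) *
          ((α ᵥ* NormedSpace.exp (t • C)) ⬝ᵥ (1 : Fin 2 → ℝ)) +
        ((α ᵥ* (C * NormedSpace.exp (t • C))) ⬝ᵥ (1 : Fin 2 → ℝ)) ^ 2 ≤ 0) ∧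
    (lam₁ = lam₂ → ∀ t : ℝ, 0 ≤ t →
      ((α ᵥ* (C * NormedSpace.exp (t • C) * (-C))) ⬝ᵥ (1 : Fin 2 → ℝ)) *
          ((α ᵥ* NormedSpace.exp (t • C)) ⬝ᵥ (1 : Fin 2 → ℝ)) +
        ((α ᵥ* (C * NormedSpace.exp (t • C))) ⬝ᵥ (1 : Fin 2 → ℝ)) ^ 2 = 0) := by
  have hexpr : ∀ t : ℝ,
      ((α ᵥ* (C * NormedSpace.exp (t • C) * (-C))) ⬝ᵥ (1 : Fin 2 → ℝ)) *
          ((α ᵥ* NormedSpace.exp (t • C)) ⬝ᵥ (1 : Fin 2 → ℝ)) +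
        ((α ᵥ* (C * NormedSpace.exp (t • C))) ⬝ᵥ (1 : Fin 2 → ℝ)) ^ 2 =
      -((NormedSpace.exp (t • C)).det * hankelDet α 1 C) := by
    intro t
    have hcomm : Commute C (NormedSpace.exp (t • C)) :=
      ((Commute.refl C).smul_right t).exp_right
    rw [← hankelDet_vecMul_of_commute hcomm, hankelDet_eq, Matrix.mul_neg, vecMul_neg,
      neg_dotProduct, vecMul_vecMul, vecMul_vecMul, ← Matrix.mul_assoc _ C, ← hcomm.eq]
    ring
  have hH := mmpp₂_hankelDet_eq σ₁ σ₂ lam₁ lam₂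
  rw [← hC, ← hα] at hH
  refine ⟨fun t _ => ?_, fun hlam t _ => ?_⟩
  · rw [hexpr, neg_nonpos, hH]
    exact mul_nonneg (det_exp_nonneg _) (by positivity)
  · rw [hexpr, hH, hlam]
    simp

/-- For an MMPP₂ with `C = !![−σ₁−λ₁, σ₁; σ₂, −σ₂−λ₂]` and event-stationary
distribution `α = (σ₂λ₁, σ₁λ₂)/(σ₂λ₁+σ₁λ₂)`, for all `t ≥ 0`:
`(α·C·e^{tC}·(−C)·𝟏)·(α·e^{tC}·𝟏) + (α·C·e^{tC}·𝟏)² ≤ 0`,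
with equality for all `t` when `λ₁ = λ₂`. -/
theorem stmt_12 (σ₁ σ₂ lam₁ lam₂ : ℝ) (hσ₁ : 0 < σ₁) (hσ₂ : 0 < σ₂)
    (hlam₁ : 0 ≤ lam₁) (hlam₂ : 0 ≤ lam₂) (hpos : 0 < σ₂ * lam₁ + σ₁ * lam₂)
    (C : Matrix (Fin 2) (Fin 2) ℝ) (hC : C = !![-σ₁ - lam₁, σ₁; σ₂, -σ₂ - lam₂])
    (α : Fin 2 → ℝ)
    (hα : α = ![σ₂ * lam₁ / (σ₂ * lam₁ + σ₁ * lam₂), σ₁ * lam₂ / (σ₂ * lam₁ + σ₁ * lam₂)]) :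
    (∀ t : ℝ, 0 ≤ t →
      ((α ᵥ* (C * NormedSpace.exp (t • C) * (-C))) ⬝ᵥ (1 : Fin 2 → ℝ)) *
          ((α ᵥ* NormedSpace.exp (t • C)) ⬝ᵥ (1 : Fin 2 → ℝ)) +
        ((α ᵥ* (C * NormedSpace.exp (t • C))) ⬝ᵥ (1 : Fin 2 → ℝ)) ^ 2 ≤ 0) ∧
    (lam₁ = lam₂ → ∀ t : ℝ, 0 ≤ t →
      ((α ᵥ* (C * NormedSpace.exp (t • C) * (-C))) ⬝ᵥ (1 : Fin 2 → ℝ)) *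
          ((α ᵥ* NormedSpace.exp (t • C)) ⬝ᵥ (1 : Fin 2 → ℝ)) +
        ((α ᵥ* (C * NormedSpace.exp (t • C))) ⬝ᵥ (1 : Fin 2 → ℝ)) ^ 2 = 0) :=
  stmt_12_general σ₁ σ₂ lam₁ lam₂ hσ₁ hσ₂ hlam₁ hlam₂ C hC α hα
end

section
/- Let σ₁, σ₂ > 0 and λ₁, λ₂ ≥ 0 with σ₂λ₁ + σ₁λ₂ > 0. Let C be the 2×2 real matrix with rows (−σ₁−λ₁, σ₁) and (σ₂, −σ₂−λ₂), π = (σ₂/(σ₁+σ₂), σ₁/(σ₁+σ₂)) and α = (σ₂λ₁/(σ₂λ₁+σ₁λ₂), σ₁λ₂/(σ₂λ₁+σ₁λ₂)). Then for all t ≥ 0, using the matrix exponential exp(tC): (π − α)·exp(tC)·𝟏 ≥ 0, with equality for all t when λ₁ = λ₂. -/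
/-!
The matrix `C` has distinct real eigenvalues `μ > ν` (its discriminant is
`(σ₁ + λ₁ - σ₂ - λ₂)² + 4σ₁σ₂ > 0`), so `e^{tC} = e^{tν} + b(t) (C - ν)` with the divided
difference `b(t) = (e^{tμ} - e^{tν}) / (μ - ν) ≥ 0`. As `π - α` has total mass zero, the quantity
equals `b(t) · (π - α) C 𝟏 = b(t) · (α - π) λ`, and `(α - π) λ = Var_π(λ) / E_π(λ)
= σ₁σ₂(λ₁ - λ₂)² / ((σ₁ + σ₂)(σ₂λ₁ + σ₁λ₂)) ≥ 0`, which vanishes when `λ₁ = λ₂`.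
-/

open Matrix

def IsIdempotentElem.prodRingHom (R : Type*) {A : Type*} [CommRing R] [Ring A] [Algebra R A] {e : A}
    (he : IsIdempotentElem e) : R × R →+* A where
  toFun p := p.1 • e + p.2 • (1 - e)
  map_one' := by simp
  map_mul' p q := by
    have h : e * (1 - e) = 0 := by rw [mul_sub, mul_one, he.eq, sub_self]
    have h' : (1 - e) * e = 0 := by rw [sub_mul, one_mul, he.eq, sub_self]
    simp only [Prod.fst_mul, Prod.snd_mul, add_mul, mul_add, smul_mul_smul_comm, he.eq,
      he.one_sub.eq, h, h', smul_zero]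
    simp [mul_smul]
  map_zero' := by simp
  map_add' p q := by simp only [Prod.fst_add, Prod.snd_add, add_smul]; abel

section

variable {n : Type*} [Fintype n] [DecidableEq n]

theorem Matrix.exp_smul_of_mul_sub_smul_eq_zero {M : Matrix n n ℝ} {μ ν : ℝ} (hμν : μ ≠ ν)
    (hM : (M - μ • 1) * (M - ν • 1) = 0) (t : ℝ) :
    NormedSpace.exp (t • M) = Real.exp (t * ν) • 1
      + ((Real.exp (t * μ) - Real.exp (t * ν)) / (μ - ν)) • (M - ν • 1) := by
  have hμν' : μ - ν ≠ 0 := sub_ne_zero.mpr hμν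
  set E := (μ - ν)⁻¹ • (M - ν • 1) with hE
  have hidem : IsIdempotentElem E := by
    have hsq : (M - ν • 1) * (M - ν • 1) = (μ - ν) • (M - ν • 1) := by
      calc (M - ν • 1) * (M - ν • 1)
          = (M - μ • 1) * (M - ν • 1) + ((μ - ν) • 1) * (M - ν • 1) := by
            rw [← add_mul]; congr 1; module
        _ = (μ - ν) • (M - ν • 1) := by rw [hM, zero_add, smul_mul_assoc, one_mul]
    rw [IsIdempotentElem, hE, smul_mul_smul_comm, hsq, smul_smul]
    congr 1
    field_simp
  -- `E` and `1 - E` are the spectral projections of `M`, so `t • M` is the image of `(tμ, tν)`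
  -- under a continuous ring homomorphism, which commutes with `exp`.
  have hφ : Continuous (hidem.prodRingHom ℝ) := by
    show Continuous fun p : ℝ × ℝ => p.1 • E + p.2 • (1 - E)
    fun_prop
  have htM : hidem.prodRingHom ℝ (t * μ, t * ν) = t • M := by
    show (t * μ) • E + (t * ν) • (1 - E) = t • M
    rw [hE]
    match_scalars <;> field_simp <;> ring
  have hexp : NormedSpace.exp (t • M) = hidem.prodRingHom ℝ (NormedSpace.exp (t * μ, t * ν)) := by
    rw [← htM]
    open scoped Norms.Operator in exact (NormedSpace.map_exp _ hφ _).symm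
  rw [hexp]
  show (NormedSpace.exp (t * μ, t * ν)).1 • E + (NormedSpace.exp (t * μ, t * ν)).2 • (1 - E) = _
  rw [Prod.fst_exp, Prod.snd_exp, ← Real.exp_eq_exp_ℝ, hE]
  match_scalars <;> field_simp <;> ring

theorem Matrix.vecMul_exp_smul_dotProduct_of_dotProduct_eq_zero {M : Matrix n n ℝ} {μ ν : ℝ}
    (hμν : μ ≠ ν) (hM : (M - μ • 1) * (M - ν • 1) = 0) {w v : n → ℝ} (hw : w ⬝ᵥ v = 0)
    (t : ℝ) :
    (w ᵥ* NormedSpace.exp (t • M)) ⬝ᵥ v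
      = (Real.exp (t * μ) - Real.exp (t * ν)) / (μ - ν) * ((w ᵥ* M) ⬝ᵥ v) := by
  rw [M.exp_smul_of_mul_sub_smul_eq_zero hμν hM]
  simp [vecMul_add, vecMul_sub, vecMul_smul, add_dotProduct, sub_dotProduct, hw]

end

theorem Real.exp_mul_sub_exp_mul_div_sub_nonneg {t : ℝ} (ht : 0 ≤ t) (μ ν : ℝ) :
    0 ≤ (Real.exp (t * μ) - Real.exp (t * ν)) / (μ - ν) := by
  rcases le_total ν μ with h | h
  · exact div_nonneg (sub_nonneg.mpr (Real.exp_le_exp.mpr (mul_le_mul_of_nonneg_left h ht)))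
      (sub_nonneg.mpr h)
  · exact div_nonneg_of_nonpos
      (sub_nonpos.mpr (Real.exp_le_exp.mpr (mul_le_mul_of_nonneg_left h ht))) (sub_nonpos.mpr h)

theorem Matrix.exists_mul_sub_smul_eq_zero_of_discr_pos (M : Matrix (Fin 2) (Fin 2) ℝ)
    (h : 0 < M.discr) : ∃ μ ν : ℝ, ν < μ ∧ (M - μ • 1) * (M - ν • 1) = 0 := by
  set s := √M.discr
  have hs : 0 < s := Real.sqrt_pos.mpr h
  have hs2 : s ^ 2 = M.trace ^ 2 - 4 * M.det := by rw [Real.sq_sqrt h.le, discr_fin_two]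
  refine ⟨(M.trace + s) / 2, (M.trace - s) / 2, by linarith, ?_⟩
  have hCH : M ^ 2 - M.trace • M + M.det • 1 = 0 := by
    have := M.aeval_self_charpoly
    rw [charpoly_fin_two] at this
    simpa [Algebra.algebraMap_eq_smul_one] using this
  calc (M - ((M.trace + s) / 2) • 1) * (M - ((M.trace - s) / 2) • 1)
      = M ^ 2 - M.trace • M + ((M.trace ^ 2 - s ^ 2) / 4) • 1 := by
        simp only [sub_mul, mul_sub, smul_mul_assoc, mul_smul_comm, one_mul, mul_one, sq]
        module
    _ = 0 := by rw [hs2, ← hCH]; congr 2; ring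

theorem stmt_13_general (σ₁ σ₂ lam₁ lam₂ : ℝ) (hσ₁ : 0 < σ₁) (hσ₂ : 0 < σ₂)
    (hpos : 0 < σ₂ * lam₁ + σ₁ * lam₂)
    (C : Matrix (Fin 2) (Fin 2) ℝ) (hC : C = !![-σ₁ - lam₁, σ₁; σ₂, -σ₂ - lam₂])
    (π : Fin 2 → ℝ) (hπ : π = ![σ₂ / (σ₁ + σ₂), σ₁ / (σ₁ + σ₂)])
    (α : Fin 2 → ℝ)
    (hα : α = ![σ₂ * lam₁ / (σ₂ * lam₁ + σ₁ * lam₂), σ₁ * lam₂ / (σ₂ * lam₁ + σ₁ * lam₂)]) :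
    (∀ t : ℝ, 0 ≤ t →
      0 ≤ ((π - α) ᵥ* NormedSpace.exp (t • C)) ⬝ᵥ (1 : Fin 2 → ℝ)) ∧
    (lam₁ = lam₂ → ∀ t : ℝ, 0 ≤ t →
      ((π - α) ᵥ* NormedSpace.exp (t • C)) ⬝ᵥ (1 : Fin 2 → ℝ) = 0) := by
  obtain ⟨μ, ν, hνμ, hCμν⟩ := C.exists_mul_sub_smul_eq_zero_of_discr_pos (by
    rw [discr_fin_two, hC, trace_fin_two_of, det_fin_two_of]
    nlinarith [sq_nonneg (σ₁ + lam₁ - σ₂ - lam₂), mul_pos hσ₁ hσ₂])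
  have hmass : (π - α) ⬝ᵥ 1 = 0 := by
    simp only [hπ, hα, dotProduct, Pi.sub_apply, Pi.one_apply, mul_one, Fin.sum_univ_two,
      cons_val_zero, cons_val_one, cons_val_fin_one]
    field_simp
    ring
  have hdrift : ((π - α) ᵥ* C) ⬝ᵥ 1
      = σ₁ * σ₂ * (lam₁ - lam₂) ^ 2 / ((σ₁ + σ₂) * (σ₂ * lam₁ + σ₁ * lam₂)) := by
    simp only [hπ, hα, hC, vecMul, dotProduct, Pi.sub_apply, Pi.one_apply, mul_one, of_apply,
      cons_val', Fin.sum_univ_two, cons_val_zero, cons_val_one, cons_val_fin_one]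
    field_simp
    ring
  have hvalue : ∀ t : ℝ, ((π - α) ᵥ* NormedSpace.exp (t • C)) ⬝ᵥ 1
      = (Real.exp (t * μ) - Real.exp (t * ν)) / (μ - ν)
        * (σ₁ * σ₂ * (lam₁ - lam₂) ^ 2 / ((σ₁ + σ₂) * (σ₂ * lam₁ + σ₁ * lam₂))) := by
    intro t
    rw [C.vecMul_exp_smul_dotProduct_of_dotProduct_eq_zero hνμ.ne' hCμν hmass, hdrift]
  refine ⟨fun t ht => ?_, fun hlam t _ => ?_⟩
  · rw [hvalue]
    exact mul_nonneg (Real.exp_mul_sub_exp_mul_div_sub_nonneg ht μ ν) (by positivity)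
  · rw [hvalue, hlam]
    simp

/-- For an MMPP₂ with `C = !![−σ₁−λ₁, σ₁; σ₂, −σ₂−λ₂]`,
`π = (σ₂, σ₁)/(σ₁+σ₂)` and `α = (σ₂λ₁, σ₁λ₂)/(σ₂λ₁+σ₁λ₂)`, for all `t ≥ 0`:
`(π − α)·e^{tC}·𝟏 ≥ 0`, with equality for all `t` when `λ₁ = λ₂`. -/
theorem stmt_13 (σ₁ σ₂ lam₁ lam₂ : ℝ) (hσ₁ : 0 < σ₁) (hσ₂ : 0 < σ₂)
    (hlam₁ : 0 ≤ lam₁) (hlam₂ : 0 ≤ lam₂) (hpos : 0 < σ₂ * lam₁ + σ₁ * lam₂)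
    (C : Matrix (Fin 2) (Fin 2) ℝ) (hC : C = !![-σ₁ - lam₁, σ₁; σ₂, -σ₂ - lam₂])
    (π : Fin 2 → ℝ) (hπ : π = ![σ₂ / (σ₁ + σ₂), σ₁ / (σ₁ + σ₂)])
    (α : Fin 2 → ℝ)
    (hα : α = ![σ₂ * lam₁ / (σ₂ * lam₁ + σ₁ * lam₂), σ₁ * lam₂ / (σ₂ * lam₁ + σ₁ * lam₂)]) :
    (∀ t : ℝ, 0 ≤ t →
      0 ≤ ((π - α) ᵥ* NormedSpace.exp (t • C)) ⬝ᵥ (1 : Fin 2 → ℝ)) ∧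
    (lam₁ = lam₂ → ∀ t : ℝ, 0 ≤ t →
      ((π - α) ᵥ* NormedSpace.exp (t • C)) ⬝ᵥ (1 : Fin 2 → ℝ) = 0) :=
  stmt_13_general σ₁ σ₂ lam₁ lam₂ hσ₁ hσ₂ hpos C hC π hπ α hα
end

section
/- Let Q be a symmetric real p×p matrix with nonnegative off-diagonal entries and Q·𝟏 = 0, and let D = diag(λ₁,…,λ_p) with λᵢ ≥ 0 and Σᵢ λᵢ > 0. Set C = Q − D, let π be the uniform probability vector πᵢ = 1/p, and let αᵢ = λᵢ/(Σⱼ λⱼ). Then for all t ≥ 0, using the matrix exponential exp(tC): (π − α)·exp(tC)·𝟏 ≥ 0. -/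
/-!
Shifting `C` by a multiple of the identity, `A = C + (Λ/p)·1` with `Λ = Σⱼ λⱼ`, gives a symmetric
matrix with `A𝟏 = Λ(π − α)` and only rescales `exp(tC)` by `exp(tΛ/p)`. For symmetric `A`, the
function `s ↦ (A𝟏)·exp(sA)𝟏` has derivative `(A𝟏)·exp(sA)(A𝟏) ≥ 0`, because `exp(sA)` is the square
of the symmetric matrix `exp(sA/2)`. It vanishes at `s = 0` since `(π − α)·𝟏 = 0`, so it is
nonnegative for `s ≥ 0`.
-/

open Matrix

section

variable {ι : Type*} [Fintype ι] [DecidableEq ι]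

theorem Matrix.IsSymm.dotProduct_exp_mulVec_self_nonneg {A : Matrix ι ι ℝ} (hA : A.IsSymm)
    (x : ι → ℝ) : 0 ≤ x ⬝ᵥ (NormedSpace.exp A *ᵥ x) := by
  set B := NormedSpace.exp ((2⁻¹ : ℝ) • A)
  have hB : B.IsSymm := (hA.smul _).exp
  have hsquare : NormedSpace.exp A = B * B := by
    rw [← Matrix.exp_add_of_commute _ _ (Commute.refl _), ← add_smul]
    norm_num
  rw [hsquare, ← mulVec_mulVec, dotProduct_mulVec, ← mulVec_transpose, hB]
  exact dotProduct_star_self_nonneg (B *ᵥ x)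

open scoped Norms.Operator in
theorem Matrix.IsSymm.monotone_dotProduct_exp_smul_mulVec {A : Matrix ι ι ℝ} (hA : A.IsSymm)
    (u : ι → ℝ) : Monotone fun s : ℝ => (A *ᵥ u) ⬝ᵥ (NormedSpace.exp (s • A) *ᵥ u) := by
  let L : Matrix ι ι ℝ →L[ℝ] ℝ := LinearMap.toContinuousLinearMap
    (dotProductBilin ℝ ℝ (A *ᵥ u) ∘ₗ LinearMap.applyₗ u ∘ₗ Matrix.toLin'.toLinearMap)
  refine monotone_of_hasDerivAt_nonneg (f' := fun s => L (NormedSpace.exp (s • A) * A))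
    (fun s => L.hasFDerivAt.comp_hasDerivAt s (hasDerivAt_exp_smul_const A s)) (fun s => ?_)
  change 0 ≤ (A *ᵥ u) ⬝ᵥ ((NormedSpace.exp (s • A) * A) *ᵥ u)
  rw [← mulVec_mulVec]
  exact (hA.smul s).dotProduct_exp_mulVec_self_nonneg _

open scoped Norms.Operator in
theorem Matrix.exp_smul_one (c : ℝ) :
    NormedSpace.exp (c • 1 : Matrix ι ι ℝ) = Real.exp c • 1 := by
  have h := (NormedSpace.algebraMap_exp_comm (𝔸 := Matrix ι ι ℝ) c).symm
  rw [Algebra.algebraMap_eq_smul_one, Algebra.algebraMap_eq_smul_one] at h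
  rwa [Real.exp_eq_exp_ℝ]

theorem Matrix.exp_add_smul_one (M : Matrix ι ι ℝ) (c : ℝ) :
    NormedSpace.exp (M + c • 1) = Real.exp c • NormedSpace.exp M := by
  rw [Matrix.exp_add_of_commute _ _ ((Commute.one_right M).smul_right c), exp_smul_one,
    mul_smul_one]

end

theorem stmt_15_general {p : ℕ} (hp : 0 < p)
    (Q : Matrix (Fin p) (Fin p) ℝ) (hQsymm : Q.IsSymm)
    (hQ1 : Q *ᵥ (1 : Fin p → ℝ) = 0)
    (lam : Fin p → ℝ) (hlam_pos : 0 < ∑ i, lam i)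
    (C : Matrix (Fin p) (Fin p) ℝ) (hC : C = Q - Matrix.diagonal lam)
    (π : Fin p → ℝ) (hπ : π = fun _ => (1 : ℝ) / p)
    (α : Fin p → ℝ) (hα : α = fun i => lam i / ∑ j, lam j) :
    ∀ t : ℝ, 0 ≤ t →
      0 ≤ ((π - α) ᵥ* NormedSpace.exp (t • C)) ⬝ᵥ (1 : Fin p → ℝ) := by
  intro t ht
  set Λ := ∑ i, lam i
  set A := C + (Λ / p) • 1
  have hΛ : Λ ≠ 0 := hlam_pos.ne'
  have hp' : (p : ℝ) ≠ 0 := Nat.cast_ne_zero.mpr hp.ne'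
  have hA : A.IsSymm := by
    subst hC
    exact (hQsymm.sub (isSymm_diagonal lam)).add (isSymm_one.smul _)
  have hA1 : A *ᵥ 1 = Λ • (π - α) := by
    rw [add_mulVec, smul_mulVec, one_mulVec, hC, sub_mulVec, hQ1, hπ, hα]
    ext i
    simp only [Pi.add_apply, Pi.sub_apply, Pi.smul_apply, Pi.zero_apply, mulVec_diagonal,
      Pi.one_apply, smul_eq_mul]
    field_simp
    ring
  have hsum : (π - α) ⬝ᵥ 1 = 0 := by
    simp only [dotProduct_one, hπ, hα, Pi.sub_apply, Finset.sum_sub_distrib, ← Finset.sum_div,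
      Finset.sum_const, Finset.card_univ, Fintype.card_fin, nsmul_eq_mul]
    field_simp
    ring
  have hexp : NormedSpace.exp (t • A) = Real.exp (t * (Λ / p)) • NormedSpace.exp (t • C) := by
    rw [smul_add, smul_smul, exp_add_smul_one]
  have hmono := hA.monotone_dotProduct_exp_smul_mulVec 1 ht
  simp only [zero_smul, NormedSpace.exp_zero, one_mulVec, hA1, hexp, smul_dotProduct, hsum,
    smul_mulVec, dotProduct_smul, smul_eq_mul, mul_zero] at hmono
  rw [← dotProduct_mulVec]
  exact nonneg_of_mul_nonneg_right (nonneg_of_mul_nonneg_right hmono (Real.exp_pos _)) hlam_pos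

/-- For an MMPP with symmetric generator `Q` (nonnegative off-diagonal
entries, `Q·𝟏 = 0`) and `D = diag(λ)` with `λᵢ ≥ 0`, `Σᵢ λᵢ > 0`, `C = Q − D`,
uniform `π` and `αᵢ = λᵢ/Σⱼλⱼ`: for all `t ≥ 0`, `(π − α)·e^{tC}·𝟏 ≥ 0`. -/
theorem stmt_15 {p : ℕ} (hp : 0 < p)
    (Q : Matrix (Fin p) (Fin p) ℝ) (hQsymm : Q.IsSymm)
    (hQoff : ∀ i j, i ≠ j → 0 ≤ Q i j)
    (hQ1 : Q *ᵥ (1 : Fin p → ℝ) = 0)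
    (lam : Fin p → ℝ) (hlam_nonneg : ∀ i, 0 ≤ lam i) (hlam_pos : 0 < ∑ i, lam i)
    (C : Matrix (Fin p) (Fin p) ℝ) (hC : C = Q - Matrix.diagonal lam)
    (π : Fin p → ℝ) (hπ : π = fun _ => (1 : ℝ) / p)
    (α : Fin p → ℝ) (hα : α = fun i => lam i / ∑ j, lam j) :
    ∀ t : ℝ, 0 ≤ t →
      0 ≤ ((π - α) ᵥ* NormedSpace.exp (t • C)) ⬝ᵥ (1 : Fin p → ℝ) :=
  stmt_15_general hp Q hQsymm hQ1 lam hlam_pos C hC π hπ α hα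
end
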